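/- arXiv:2004.13961 — 3 statements merged into one kernel-verified Lean document; each statement's English description precedes it below -/
import Mathlib

section
/- For all natural numbers j, k, the integral over [−1,1] of φ'_j(x)·φ'_k(x) equals (4j+6) if j = k and 0 otherwise. In particular, the one-dimensional Legendre–Galerkin stiffness matrix with constant coefficient is diagonal. -/
/-!
Since `L'_{k+2} - L'_k = (2k+3) L_{k+1}`, we have `φ'_k = -(2k+3) L_{k+1}`, so the stiffness
entries are `(2j+3)(2k+3) ∫ L_{j+1} L_{k+1}`. Orthogonality of the `L_n` comes from Legendre's
equation `((1 - x²) L_n')' = -n(n+1) L_n`: the operator on the left is symmetric on `[-1, 1]`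
and the eigenvalues `-n(n+1)` are distinct. The three-term recurrence together with orthogonality
shows that `(2n+1) ∫ L_n²` does not depend on `n`, hence equals `∫ L_0² = 2`.
-/

open Polynomial MeasureTheory intervalIntegral Finset

/-- The `n`-th Legendre polynomial, defined by `L_0 = 1`, `L_1 = X`, and the
three-term recurrence `(n+1) L_{n+1} = (2n+1) X L_n - n L_{n-1}`. -/
noncomputable def legendre : ℕ → Polynomial ℝ
  | 0 => 1
  | 1 => Polynomial.X
  | (n+2) =>
      Polynomial.C ((2*(n:ℝ)+3)/((n:ℝ)+2)) * (Polynomial.X * legendre (n+1))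
        - Polynomial.C (((n:ℝ)+1)/((n:ℝ)+2)) * legendre n

/-- The Legendre–Galerkin Dirichlet basis function `φ_k = L_k - L_{k+2}`. -/
noncomputable def phi (k : ℕ) : Polynomial ℝ := legendre k - legendre (k+2)

noncomputable def polyIntervalIntegral (a b : ℝ) : ℝ[X] →ₗ[ℝ] ℝ where
  toFun p := ∫ x in a..b, p.eval x
  map_add' p q := by
    simpa only [eval_add] using
      integral_add (p.continuous.intervalIntegrable a b) (q.continuous.intervalIntegrable a b)
  map_smul' c p := by
    simp only [eval_smul, smul_eq_mul, intervalIntegral.integral_const_mul, RingHom.id_apply]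

lemma polyIntervalIntegral_apply (a b : ℝ) (p : ℝ[X]) :
    polyIntervalIntegral a b p = ∫ x in a..b, p.eval x := rfl

lemma polyIntervalIntegral_derivative (a b : ℝ) (p : ℝ[X]) :
    polyIntervalIntegral a b (derivative p) = p.eval b - p.eval a :=
  integral_eq_sub_of_hasDerivAt (fun x _ ↦ p.hasDerivAt x)
    (p.derivative.continuous.intervalIntegrable a b)

lemma polyIntervalIntegral_C_mul (a b c : ℝ) (p : ℝ[X]) :
    polyIntervalIntegral a b (C c * p) = c * polyIntervalIntegral a b p := by
  rw [← smul_eq_C_mul, map_smul, smul_eq_mul]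

lemma polyIntervalIntegral_X_pow (a b : ℝ) (n : ℕ) :
    polyIntervalIntegral a b (X ^ n) = (b ^ (n + 1) - a ^ (n + 1)) / (n + 1) := by
  simp only [polyIntervalIntegral_apply, eval_pow, eval_X, integral_pow]

/-- Symmetry of the Legendre operator `p ↦ ((1 - X²) p')'`: as `1 - X²` vanishes at `±1`,
integrating by parts leaves no boundary terms. -/
lemma polyIntervalIntegral_legendreOperator_mul_comm (p q : ℝ[X]) :
    polyIntervalIntegral (-1) 1 (derivative ((1 - X ^ 2) * derivative p) * q)
      = polyIntervalIntegral (-1) 1 (derivative ((1 - X ^ 2) * derivative q) * p) := by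
  have hbd : polyIntervalIntegral (-1) 1
      (derivative ((1 - X ^ 2) * (derivative p * q - derivative q * p))) = 0 := by
    rw [polyIntervalIntegral_derivative]
    simp
  rw [← sub_eq_zero, ← map_sub, ← hbd]
  congr 1
  simp only [derivative_mul, derivative_sub]
  ring

lemma legendre_recurrence (n : ℕ) :
    ((n : ℝ[X]) + 2) * legendre (n + 2)
      = (2 * (n : ℝ[X]) + 3) * X * legendre (n + 1) - ((n : ℝ[X]) + 1) * legendre n := by
  have hn : (n : ℝ) + 2 ≠ 0 := by positivity
  have hC (c : ℝ) : ((n : ℝ[X]) + 2) * C (c / ((n : ℝ) + 2)) = C c := by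
    rw [← C_eq_natCast, ← C_ofNat, ← C_add, ← C_mul, mul_div_cancel₀ _ hn]
  rw [legendre, mul_sub, ← mul_assoc, hC, ← mul_assoc _ (C _), hC]
  simp only [C_add, C_mul, C_ofNat, C_eq_natCast, C_1]
  ring

lemma derivative_legendre_succ (n : ℕ) :
    derivative (legendre (n + 1)) = X * derivative (legendre n) + ((n : ℝ[X]) + 1) * legendre n
    ∧ X * derivative (legendre (n + 1))
        = derivative (legendre n) + ((n : ℝ[X]) + 1) * legendre (n + 1) := by
  induction n with
  | zero => simp [legendre]
  | succ n ih =>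
    obtain ⟨hA, hB⟩ := ih
    have hn : (n : ℝ[X]) + 2 ≠ 0 := by exact_mod_cast (n + 1).succ_ne_zero
    have hR := legendre_recurrence n
    have hR' := congrArg derivative hR
    simp only [derivative_mul, derivative_add, derivative_sub, derivative_natCast,
      derivative_ofNat, derivative_one, derivative_X] at hR'
    push_cast
    constructor
    · refine mul_left_cancel₀ hn ?_
      linear_combination hR' + ((n : ℝ[X]) + 1) * hB
    · refine mul_left_cancel₀ hn ?_
      linear_combination X * hR' + (2 * (n : ℝ[X]) + 3) * X * hB - ((n : ℝ[X]) + 2) * hR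
        - ((n : ℝ[X]) + 2) * hA

lemma derivative_phi (k : ℕ) : derivative (phi k) = C (-(2 * k + 3 : ℝ)) * legendre (k + 1) := by
  have hA := (derivative_legendre_succ (k + 1)).1
  have hB := (derivative_legendre_succ k).2
  push_cast at hA
  rw [phi, derivative_sub, C_neg, C_add, C_mul, C_ofNat, C_ofNat, C_eq_natCast]
  linear_combination -hA - hB

/-- Legendre's differential equation. -/
lemma derivative_one_sub_X_sq_mul_derivative_legendre (n : ℕ) :
    derivative ((1 - X ^ 2) * derivative (legendre n))
      = C (-(n * (n + 1) : ℝ)) * legendre n := by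
  cases n with
  | zero => simp [legendre]
  | succ n =>
    obtain ⟨hA, hB⟩ := derivative_legendre_succ n
    have hflux : (1 - X ^ 2) * derivative (legendre (n + 1))
        = ((n : ℝ[X]) + 1) * (legendre n - X * legendre (n + 1)) := by
      linear_combination hA - X * hB
    rw [hflux, C_neg, C_mul, C_add, C_1, C_eq_natCast]
    simp only [derivative_mul, derivative_sub, derivative_add, derivative_natCast,
      derivative_one, derivative_X]
    push_cast
    linear_combination -((n : ℝ[X]) + 1) * hB

lemma legendre_orthogonal {m n : ℕ} (hmn : m ≠ n) :
    polyIntervalIntegral (-1) 1 (legendre m * legendre n) = 0 := by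
  have hsymm := polyIntervalIntegral_legendreOperator_mul_comm (legendre m) (legendre n)
  rw [derivative_one_sub_X_sq_mul_derivative_legendre,
    derivative_one_sub_X_sq_mul_derivative_legendre, mul_assoc, mul_assoc,
    polyIntervalIntegral_C_mul, polyIntervalIntegral_C_mul, mul_comm (legendre n)] at hsymm
  have heig : (m : ℝ) * (m + 1) ≠ n * (n + 1) := by
    intro h
    have h' : m * (m + 1) = n * (n + 1) := by exact_mod_cast h
    rcases lt_or_gt_of_ne hmn with hlt | hlt <;> nlinarith
  exact (mul_eq_zero.1 (by linear_combination -hsymm)).resolve_left (sub_ne_zero.2 heig)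

lemma polyIntervalIntegral_legendre_add_two_mul (a b : ℝ) (n : ℕ) (q : ℝ[X]) :
    polyIntervalIntegral a b (legendre (n + 2) * q)
      = (2 * n + 3) / (n + 2) * polyIntervalIntegral a b (X * legendre (n + 1) * q)
        - (n + 1) / (n + 2) * polyIntervalIntegral a b (legendre n * q) := by
  rw [legendre]
  simp only [sub_mul, mul_assoc, map_sub, polyIntervalIntegral_C_mul]

/-- Multiplying the recurrence by `L_{n+1}` (one step up) and by `L_{n+2}`, orthogonality leaves
two expressions for `∫ x L_{n+1} L_{n+2}`. -/
lemma legendre_norm_sq_add_two (n : ℕ) :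
    (2 * n + 5) * polyIntervalIntegral (-1) 1 (legendre (n + 2) * legendre (n + 2))
      = (2 * n + 3) * polyIntervalIntegral (-1) 1 (legendre (n + 1) * legendre (n + 1)) := by
  have hlow := polyIntervalIntegral_legendre_add_two_mul (-1) 1 (n + 1) (legendre (n + 1))
  have hhigh := polyIntervalIntegral_legendre_add_two_mul (-1) 1 n (legendre (n + 2))
  rw [legendre_orthogonal (by omega)] at hlow
  rw [legendre_orthogonal (m := n) (by omega), mul_right_comm X] at hhigh
  push_cast at hlow
  rw [show n + 1 + 1 = n + 2 from rfl] at hlow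
  field_simp at hlow hhigh
  refine mul_left_cancel₀ (by positivity : (n : ℝ) + 2 ≠ 0) ?_
  linear_combination (2 * (n : ℝ) + 5) * hhigh - (2 * (n : ℝ) + 3) * hlow

lemma legendre_norm_sq : ∀ n : ℕ,
    (2 * n + 1) * polyIntervalIntegral (-1) 1 (legendre n * legendre n) = 2
  | 0 => by norm_num [legendre, polyIntervalIntegral_apply]
  | 1 => by
    rw [show legendre 1 = X from rfl, ← sq, polyIntervalIntegral_X_pow]
    norm_num
  | n + 2 => by
    have ih := legendre_norm_sq (n + 1)
    push_cast at ih ⊢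
    linear_combination legendre_norm_sq_add_two n + ih

theorem stiffness_diagonal (j k : ℕ) :
    (∫ x in (-1:ℝ)..1, ((phi j).derivative).eval x * ((phi k).derivative).eval x)
      = if j = k then 4*(j:ℝ)+6 else 0 := by
  calc (∫ x in (-1:ℝ)..1, ((phi j).derivative).eval x * ((phi k).derivative).eval x)
      = polyIntervalIntegral (-1) 1 ((phi j).derivative * (phi k).derivative) := by
        simp only [polyIntervalIntegral_apply, eval_mul]
    _ = (2 * j + 3) * (2 * k + 3)
          * polyIntervalIntegral (-1) 1 (legendre (j + 1) * legendre (k + 1)) := by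
        rw [derivative_phi, derivative_phi, mul_mul_mul_comm, ← C_mul,
          polyIntervalIntegral_C_mul]
        ring
    _ = if j = k then 4 * (j : ℝ) + 6 else 0 := by
        split_ifs with hjk
        · subst hjk
          have hnorm := legendre_norm_sq (j + 1)
          push_cast at hnorm
          linear_combination (2 * (j : ℝ) + 3) * hnorm
        · rw [legendre_orthogonal (by omega), mul_zero]
end

section
/- For all natural numbers m, n, k, if m + n + k is odd, or if k > m + n, or if m > n + k, or if n > m + k, then the integral over [−1,1] of L_m(x)·L_n(x)·L_k(x) equals 0. -/
open Polynomial MeasureTheory intervalIntegral Finset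

/-!
Parity: `L_n(-x) = (-1)ⁿ L_n(x)`, so for `m + n + k` odd the integrand is odd. Support: `L_k`
is orthogonal on `[-1, 1]` to every polynomial of degree `< k`, and `L_m L_n` has degree
`≤ m + n`. Orthogonality reduces to the vanishing of the moments `∫ xʲ L_k` for `j < k`, which
follows from the closed form
`∫_{-1}^{1} xʲ L_k = 2 j (j - 1) ⋯ (j - k + 1) / ((j - k + 1) (j - k + 3) ⋯ (j + k + 1))`
for `j + k` even, proved by induction on `k` through the three-term recurrence: for `j < k` the
numerator contains the factor `j - j`, while the denominator is a product of odd integers.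
-/

theorem integral_eq_zero_of_odd {E : Type*} [NormedAddCommGroup E] [NormedSpace ℝ E]
    {f : ℝ → E} (hf : Function.Odd f) (a : ℝ) : ∫ x in -a..a, f x = 0 := by
  have h : ∫ x in -a..a, f x = -∫ x in -a..a, f x := by
    calc ∫ x in -a..a, f x = ∫ x in -a..a, f (-x) := by rw [integral_comp_neg, neg_neg]
      _ = -∫ x in -a..a, f x := by simp only [hf _, intervalIntegral.integral_neg]
  rwa [eq_neg_iff_add_eq_zero, ← two_smul ℝ, smul_eq_zero, or_iff_right two_ne_zero] at h

theorem integral_pow_of_even {j : ℕ} (hj : Even j) : ∫ x in (-1 : ℝ)..1, x ^ j = 2 / (j + 1) := by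
  rw [integral_pow, one_pow, hj.add_one.neg_one_pow]
  ring

theorem legendre_natDegree_le (n : ℕ) : (legendre n).natDegree ≤ n := by
  induction n using Nat.twoStepInduction with
  | zero => simp [legendre]
  | one => simp [legendre]
  | more n ih₀ ih₁ =>
    rw [legendre]
    refine (natDegree_sub_le _ _).trans (max_le ?_ ?_)
    · refine (natDegree_C_mul_le _ _).trans (natDegree_mul_le.trans ?_)
      rw [natDegree_X]
      omega
    · exact (natDegree_C_mul_le _ _).trans (ih₀.trans (by omega))

theorem legendre_eval_neg (n : ℕ) (x : ℝ) :
    (legendre n).eval (-x) = (-1) ^ n * (legendre n).eval x := by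
  induction n using Nat.twoStepInduction generalizing x with
  | zero => simp [legendre]
  | one => simp [legendre]
  | more n ih₀ ih₁ =>
    simp only [legendre, eval_sub, eval_mul, eval_C, eval_X, ih₀, ih₁]
    ring

noncomputable def legendreMoment (j k : ℕ) : ℝ := ∫ x in (-1 : ℝ)..1, x ^ j * (legendre k).eval x

theorem intervalIntegrable_pow_mul_legendre (j k : ℕ) (a b : ℝ) :
    IntervalIntegrable (fun x : ℝ => x ^ j * (legendre k).eval x) volume a b :=
  ((continuous_pow j).mul (legendre k).continuous).intervalIntegrable a b

theorem legendreMoment_eq_zero_of_odd {j k : ℕ} (h : Odd (j + k)) : legendreMoment j k = 0 := by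
  refine integral_eq_zero_of_odd (fun x => ?_) 1
  have hsign : (-1 : ℝ) ^ j * (-1) ^ k = -1 := by rw [← pow_add, h.neg_one_pow]
  simp only [legendre_eval_neg, neg_pow x]
  linear_combination x ^ j * (legendre k).eval x * hsign

theorem legendreMoment_succ_succ (j n : ℕ) :
    ((n : ℝ) + 2) * legendreMoment j (n + 2) =
      (2 * n + 3) * legendreMoment (j + 1) (n + 1) - (n + 1) * legendreMoment j n := by
  simp only [legendreMoment]
  rw [← intervalIntegral.integral_const_mul, ← intervalIntegral.integral_const_mul,
    ← intervalIntegral.integral_const_mul,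
    ← integral_sub ((intervalIntegrable_pow_mul_legendre _ _ _ _).const_mul _)
      ((intervalIntegrable_pow_mul_legendre _ _ _ _).const_mul _)]
  refine integral_congr fun x _ => ?_
  simp only [legendre, eval_sub, eval_mul, eval_C, eval_X]
  field_simp
  ring

noncomputable def momentNumerator (k : ℕ) (t : ℝ) : ℝ := ∏ i ∈ range k, (t - i)

noncomputable def momentDenominator (k : ℕ) (t : ℝ) : ℝ := ∏ i ∈ range (k + 1), (t - k + 1 + 2 * i)

theorem momentNumerator_succ_succ (n : ℕ) (t : ℝ) :
    momentNumerator (n + 2) t = (t - n) * (t - n - 1) * momentNumerator n t := by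
  simp only [momentNumerator, prod_range_succ]
  push_cast
  ring

theorem momentNumerator_succ_add_one (n : ℕ) (t : ℝ) :
    momentNumerator (n + 1) (t + 1) = (t + 1) * momentNumerator n t := by
  simp only [momentNumerator, prod_range_succ']
  push_cast
  ring_nf

theorem momentDenominator_succ_succ (n : ℕ) (t : ℝ) :
    momentDenominator (n + 2) t = (t - n - 1) * (t + n + 3) * momentDenominator n t := by
  simp only [momentDenominator, prod_range_succ' _ (n + 2), prod_range_succ _ (n + 1)]
  push_cast
  ring_nf

theorem momentDenominator_succ_add_one (n : ℕ) (t : ℝ) :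
    momentDenominator (n + 1) (t + 1) = (t + n + 3) * momentDenominator n t := by
  simp only [momentDenominator, prod_range_succ _ (n + 1)]
  push_cast
  ring_nf

theorem momentNumerator_eq_zero_of_lt {j k : ℕ} (h : j < k) : momentNumerator k j = 0 :=
  prod_eq_zero (mem_range.2 h) (sub_self _)

theorem momentDenominator_ne_zero {j k : ℕ} (h : Even (j + k)) : momentDenominator k j ≠ 0 := by
  refine prod_ne_zero_iff.2 fun i _ => ?_
  obtain ⟨r, hr⟩ := h
  have hodd : (j : ℤ) - k + 1 + 2 * i ≠ 0 := by omega
  exact_mod_cast hodd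

theorem legendreMoment_mul_momentDenominator (k : ℕ) {j : ℕ} (h : Even (j + k)) :
    legendreMoment j k * momentDenominator k j = 2 * momentNumerator k j := by
  induction k using Nat.twoStepInduction generalizing j with
  | zero =>
    have hj : Even j := by simpa using h
    have hpos : (j : ℝ) + 1 ≠ 0 := by positivity
    simp only [legendreMoment, momentDenominator, momentNumerator, legendre, eval_one, mul_one,
      integral_pow_of_even hj, prod_range_succ, prod_range_zero, Nat.cast_zero]
    field_simp
    ring
  | one =>
    have hj : Even (j + 1) := h
    have hpos : (j : ℝ) + 2 ≠ 0 := by positivity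
    have hpow : legendreMoment j 1 = ∫ x in (-1 : ℝ)..1, x ^ (j + 1) := by
      simp only [legendreMoment, legendre, eval_X, pow_succ]
    rw [hpow, integral_pow_of_even hj]
    simp only [momentDenominator, momentNumerator, prod_range_succ, prod_range_zero]
    push_cast
    field_simp
    ring
  | more n ih₀ ih₁ =>
    obtain ⟨r, hr⟩ := h
    have hj₀ : Even (j + n) := ⟨r - 1, by omega⟩
    have hj₁ : Even (j + 1 + (n + 1)) := ⟨r, by omega⟩
    have h₀ := ih₀ hj₀
    have h₁ := ih₁ hj₁
    rw [Nat.cast_succ, momentDenominator_succ_add_one, momentNumerator_succ_add_one] at h₁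
    have hrec := legendreMoment_succ_succ j n
    -- after clearing the common factor `2 (t - n - 1) momentNumerator n t` this is
    -- `(n + 2) (t - n) = (2n + 3) (t + 1) - (n + 1) (t + n + 3)`
    apply mul_left_cancel₀ (show (n : ℝ) + 2 ≠ 0 by positivity)
    rw [momentDenominator_succ_succ, momentNumerator_succ_succ]
    linear_combination (↑j - ↑n - 1) * (↑j + ↑n + 3) * momentDenominator n j * hrec
      + (↑j - ↑n - 1) * (2 * ↑n + 3) * h₁ - (↑j - ↑n - 1) * (↑j + ↑n + 3) * (↑n + 1) * h₀

theorem legendreMoment_eq_zero_of_lt {j k : ℕ} (h : j < k) : legendreMoment j k = 0 := by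
  rcases Nat.even_or_odd (j + k) with heven | hodd
  · have hmoment := legendreMoment_mul_momentDenominator k heven
    rw [momentNumerator_eq_zero_of_lt h, mul_zero] at hmoment
    exact (mul_eq_zero.1 hmoment).resolve_right (momentDenominator_ne_zero heven)
  · exact legendreMoment_eq_zero_of_odd hodd

theorem integral_eval_mul_legendre_eq_zero_of_natDegree_lt (p : Polynomial ℝ) {k : ℕ}
    (h : p.natDegree < k) : ∫ x in (-1 : ℝ)..1, p.eval x * (legendre k).eval x = 0 := by
  have hexpand : ∀ x : ℝ, p.eval x * (legendre k).eval x =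
      ∑ j ∈ range (p.natDegree + 1), p.coeff j * (x ^ j * (legendre k).eval x) := fun x => by
    rw [eval_eq_sum_range, sum_mul]
    exact sum_congr rfl fun j _ => mul_assoc _ _ _
  rw [integral_congr fun x _ => hexpand x,
    integral_finsetSum fun j _ => (intervalIntegrable_pow_mul_legendre j k _ _).const_mul _]
  refine sum_eq_zero fun j hj => ?_
  rw [intervalIntegral.integral_const_mul]
  exact mul_eq_zero_of_right _ (legendreMoment_eq_zero_of_lt (by rw [mem_range] at hj; omega))

theorem integral_legendre_mul_legendre_mul_legendre_of_add_lt {m n k : ℕ} (h : m + n < k) :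
    ∫ x in (-1 : ℝ)..1, (legendre m).eval x * (legendre n).eval x * (legendre k).eval x = 0 := by
  have hdeg : (legendre m * legendre n).natDegree < k :=
    (natDegree_mul_le.trans (add_le_add (legendre_natDegree_le m) (legendre_natDegree_le n))).trans_lt h
  simpa only [eval_mul] using integral_eval_mul_legendre_eq_zero_of_natDegree_lt _ hdeg

theorem legendre_triple_product_vanish (m n k : ℕ)
    (h : Odd (m + n + k) ∨ m + n < k ∨ n + k < m ∨ m + k < n) :
    (∫ x in (-1:ℝ)..1,
      (legendre m).eval x * (legendre n).eval x * (legendre k).eval x) = 0 := by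
  rcases h with hodd | hk | hm | hn
  · refine integral_eq_zero_of_odd (fun x => ?_) 1
    have hsign : (-1 : ℝ) ^ m * (-1) ^ n * (-1) ^ k = -1 := by
      rw [← pow_add, ← pow_add, hodd.neg_one_pow]
    simp only [legendre_eval_neg]
    linear_combination (legendre m).eval x * (legendre n).eval x * (legendre k).eval x * hsign
  · exact integral_legendre_mul_legendre_mul_legendre_of_add_lt hk
  · rw [← integral_legendre_mul_legendre_mul_legendre_of_add_lt hm]
    exact integral_congr fun x _ => by ring
  · rw [← integral_legendre_mul_legendre_mul_legendre_of_add_lt hn]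
    exact integral_congr fun x _ => by ring
end

section
/- For all natural numbers m ≥ n, the leading coefficient formula holds: writing L_m·L_n in the Legendre basis as Σ_{s=0}^{n} c_s·L_{m+n−2s}, the coefficient of the top term L_{m+n} is c_0 = C_m·C_n/C_{m+n}, where C_r = (1·3·…·(2r−1))/(r!·2^r). In particular c_0 > 0. -/
open Polynomial MeasureTheory intervalIntegral Finset

/-- `C_r = (1·3·…·(2r-1)) / (r! · 2^r)`, with `C_0 = 1`. -/
noncomputable def Ccoef (r : ℕ) : ℝ :=
  (∏ i ∈ Finset.range r, (2*(i:ℝ)+1)) / ((r.factorial : ℝ) * 2^r)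


/-! Since `C_{r+1} = (2r+1)/(2r+2) · C_r`, the recurrence shows that `L_r` has degree at most `r`
with `X^r`-coefficient `2^r C_r`. The `X^{m+n}`-coefficient of `L_m L_n` is therefore
`2^m C_m · 2^n C_n = (C_m C_n / C_{m+n}) · 2^{m+n} C_{m+n}`. -/

lemma Ccoef_succ (r : ℕ) : Ccoef (r + 1) = (2 * r + 1) / (2 * (r + 1)) * Ccoef r := by
  have hfac : (r.factorial : ℝ) ≠ 0 := by positivity
  simp only [Ccoef, prod_range_succ, Nat.factorial_succ]
  push_cast
  field_simp
  ring

lemma Ccoef_pos (r : ℕ) : 0 < Ccoef r := by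
  unfold Ccoef
  have := Finset.prod_pos fun (i : ℕ) (_ : i ∈ range r) => (by positivity : (0 : ℝ) < 2 * i + 1)
  positivity

lemma natDegree_legendre_le : ∀ r, (legendre r).natDegree ≤ r
  | 0 => by simp [legendre]
  | 1 => by simp [legendre]
  | r + 2 => by
    have hX : (X * legendre (r + 1)).natDegree ≤ r + 2 :=
      natDegree_mul_le.trans (by have := natDegree_legendre_le (r + 1); rw [natDegree_X]; omega)
    rw [legendre]
    refine (natDegree_sub_le _ _).trans (max_le ?_ ?_)
    · exact (natDegree_C_mul_le _ _).trans hX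
    · exact (natDegree_C_mul_le _ _).trans ((natDegree_legendre_le r).trans (by omega))

lemma coeff_legendre_self : ∀ r, (legendre r).coeff r = 2 ^ r * Ccoef r
  | 0 => by simp [legendre, Ccoef]
  | 1 => by norm_num [legendre, Ccoef]
  | r + 2 => by
    have hlow : (legendre r).coeff (r + 2) = 0 :=
      coeff_eq_zero_of_natDegree_lt ((natDegree_legendre_le r).trans_lt (by omega))
    rw [legendre, coeff_sub, coeff_C_mul, coeff_C_mul, coeff_X_mul, hlow,
      coeff_legendre_self (r + 1), Ccoef_succ (r + 1)]
    push_cast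
    field_simp
    ring

theorem linearization_leading_coeff_general (m n : ℕ) :
    (legendre m * legendre n).coeff (m + n)
        = (Ccoef m * Ccoef n / Ccoef (m+n)) * (legendre (m+n)).coeff (m+n) ∧
      0 < Ccoef m * Ccoef n / Ccoef (m+n) := by
  refine ⟨?_, div_pos (mul_pos (Ccoef_pos m) (Ccoef_pos n)) (Ccoef_pos (m + n))⟩
  have hC := (Ccoef_pos (m + n)).ne'
  rw [coeff_mul_add_eq_of_natDegree_le (natDegree_legendre_le m) (natDegree_legendre_le n),
    coeff_legendre_self, coeff_legendre_self, coeff_legendre_self]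
  field_simp
  ring

theorem linearization_leading_coeff (m n : ℕ) (hmn : n ≤ m) :
    (legendre m * legendre n).coeff (m + n)
        = (Ccoef m * Ccoef n / Ccoef (m+n)) * (legendre (m+n)).coeff (m+n) ∧
      0 < Ccoef m * Ccoef n / Ccoef (m+n) :=
  linearization_leading_coeff_general m n
end
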